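/- arXiv:2401.09117 — 2 statements merged into one kernel-verified Lean document; each statement's English description precedes it below -/
import Mathlib

section
/- Let d, q ≥ 2 and let ψ₁, …, ψ_N be polynomials in d variables each of degree at most 2 with zero constant term (each ψ_j is nonconstant). Suppose P(λ₁, …, λ_q) = Σ_{m ∈ [N]^q} b_m Σ_{π ∈ S_q} Π_{i=1}^q ψ_{m_{π(i)}}(λ_i) (with λ_i ∈ ℝ^d and real coefficients b_m) satisfies P(λ₁, …, λ_q) = P̃(λ₁ + ⋯ + λ_q) for some polynomial P̃ on ℝ^d with P̃(0) = 0. Then P is identically zero. -/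
/-!
Put `λ₁ = x` and all other `λᵢ = 0`. Since `q ≥ 2`, every product in `P` contains a factor
`ψⱼ(0) = 0`, so `P̃(x) = P(x, 0, …, 0) = 0` for every `x`; hence `P = P̃(λ₁ + ⋯ + λ_q) = 0`.
-/

open MvPolynomial

theorem MvPolynomial.prod_eval_eq_zero_of_constantCoeff_eq_zero
    {ι κ σ R : Type*} [Fintype ι] [CommSemiring R]
    (ψ : κ → MvPolynomial σ R) (hconst : ∀ j, constantCoeff (ψ j) = 0)
    (m : ι → κ) (lam : ι → σ → R) {i : ι} (hi : lam i = 0) :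
    ∏ k, eval (lam k) (ψ (m k)) = 0 :=
  Finset.prod_eq_zero (Finset.mem_univ i) (by rw [hi, eval_zero, hconst])

theorem eq_zero_of_factors_through_sum_of_apply_eq_zero
    {ι M R : Type*} [Fintype ι] [DecidableEq ι] [AddCommMonoid M] [Zero R]
    {i j : ι} (hij : i ≠ j) (g : (ι → M) → R) (G : M → R)
    (hg : ∀ lam, g lam = G (∑ k, lam k)) (hzero : ∀ lam, lam j = 0 → g lam = 0)
    (lam : ι → M) : g lam = 0 := by
  have hG : ∀ x, G x = 0 := fun x => by
    have hsum : ∑ k, Pi.single i x k = x := by simp [Finset.sum_pi_single']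
    rw [← hsum, ← hg]
    exact hzero _ (Pi.single_eq_of_ne hij.symm _)
  rw [hg, hG]

theorem symmetric_product_sum_not_function_of_sum_general
    (d q N : ℕ) (hq : 2 ≤ q)
    (ψ : Fin N → MvPolynomial (Fin d) ℝ)
    (hconst : ∀ j, constantCoeff (ψ j) = 0)
    (b : (Fin q → Fin N) → ℝ)
    (P : (Fin q → (Fin d → ℝ)) → ℝ)
    (hP : ∀ lam : Fin q → (Fin d → ℝ),
      P lam = ∑ m : Fin q → Fin N, b m *
        ∑ π : Equiv.Perm (Fin q), ∏ i : Fin q, eval (lam i) (ψ (m (π i))))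
    (Ptil : MvPolynomial (Fin d) ℝ)
    (hcomp : ∀ lam : Fin q → (Fin d → ℝ), P lam = eval (∑ i, lam i) Ptil) :
    ∀ lam : Fin q → (Fin d → ℝ), P lam = 0 := by
  have h01 : (⟨0, by omega⟩ : Fin q) ≠ ⟨1, by omega⟩ := by simp
  refine eq_zero_of_factors_through_sum_of_apply_eq_zero h01 P (eval · Ptil) hcomp ?_
  intro lam hlam
  rw [hP]
  refine Finset.sum_eq_zero fun m _ => mul_eq_zero_of_right _ (Finset.sum_eq_zero fun π _ => ?_)
  exact prod_eval_eq_zero_of_constantCoeff_eq_zero ψ hconst (m ∘ π) lam hlam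

/-- Structural lemma: a symmetric sum
`P(λ₁,…,λ_q) = Σ_m b_m Σ_{π ∈ S_q} Π_i ψ_{m(π(i))}(λ_i)`
of products of `q ≥ 2` nonconstant polynomial factors of degree at most `2` with zero
constant term, each factor depending on a distinct variable `λ_i ∈ ℝ^d`, cannot be a
function `P̃(λ₁+⋯+λ_q)` of the sum alone with `P̃(0) = 0`, unless `P` vanishes identically. -/
theorem symmetric_product_sum_not_function_of_sum
    (d q N : ℕ) (hd : 2 ≤ d) (hq : 2 ≤ q)
    (ψ : Fin N → MvPolynomial (Fin d) ℝ)
    (hdeg : ∀ j, (ψ j).totalDegree ≤ 2)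
    (hconst : ∀ j, constantCoeff (ψ j) = 0)
    (hne : ∀ j, ψ j ≠ 0)
    (b : (Fin q → Fin N) → ℝ)
    (P : (Fin q → (Fin d → ℝ)) → ℝ)
    (hP : ∀ lam : Fin q → (Fin d → ℝ),
      P lam = ∑ m : Fin q → Fin N, b m *
        ∑ π : Equiv.Perm (Fin q), ∏ i : Fin q, eval (lam i) (ψ (m (π i))))
    (Ptil : MvPolynomial (Fin d) ℝ)
    (hPt0 : eval (0 : Fin d → ℝ) Ptil = 0)
    (hcomp : ∀ lam : Fin q → (Fin d → ℝ), P lam = eval (∑ i, lam i) Ptil) :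
    ∀ lam : Fin q → (Fin d → ℝ), P lam = 0 :=
  symmetric_product_sum_not_function_of_sum_general d q N hq ψ hconst b P hP Ptil hcomp
end

section
/- Let Ψ : ℝ^d → [0, ∞) be bounded and integrable. Then for every integer q ≥ 2 and every r with 1 ≤ r ≤ q − 1, (1/(2T)^{2d}) ∫_{([−T,T]^d)^4} Ψ(t−s)^r Ψ(t'−s')^r Ψ(t'−t)^{q−r} Ψ(s−s')^{q−r} ds dt ds' dt' ≤ C/(2T)^d for a constant C depending only on Ψ, q, d (not on T). -/
/-!
Since `0 ≤ Ψ ≤ M`, the integrand is at most `M ^ (2q - 3) Ψ(t - s) Ψ(s - s') Ψ(t' - t)`: keep one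
factor from three of the four powers and bound everything else by `M`. The three surviving
differences form the path `t' — t — s — s'`, so integrating out `t'`, then `s'`, then `t` over the
whole space yields `‖Ψ‖₁` each time by translation (and reflection) invariance, and the remaining
integral over `s ∈ [-T, T]^d` contributes `(2T)^d`. Tonelli is only needed as an inequality
(`lintegral_prod_le`), so `Ψ` need not be measurable.
-/

open MeasureTheory ENNReal

theorem pow_le_pow_pred_mul {R : Type*} [CommSemiring R] [PartialOrder R] [IsOrderedRing R]
    {a M : R} (ha : 0 ≤ a) (haM : a ≤ M) {n : ℕ} (hn : 1 ≤ n) : a ^ n ≤ M ^ (n - 1) * a := by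
  obtain ⟨k, rfl⟩ := Nat.exists_eq_add_of_le' hn
  rw [pow_succ, Nat.add_sub_cancel]
  exact mul_le_mul_of_nonneg_right (pow_le_pow_left₀ ha haM k) ha

theorem contraction_monomial_le {R : Type*} [CommSemiring R] [PartialOrder R] [IsOrderedRing R]
    {a b c e M : R} (ha : 0 ≤ a) (hb : 0 ≤ b) (hc : 0 ≤ c) (he : 0 ≤ e)
    (haM : a ≤ M) (hbM : b ≤ M) (hcM : c ≤ M) (heM : e ≤ M) {q r : ℕ} (hr : 1 ≤ r) (hrq : r < q) :
    a ^ r * b ^ r * c ^ (q - r) * e ^ (q - r) ≤ M ^ (2 * q - 3) * (a * e * c) := by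
  have hM : 0 ≤ M := ha.trans haM
  calc a ^ r * b ^ r * c ^ (q - r) * e ^ (q - r)
      ≤ (M ^ (r - 1) * a) * M ^ r * (M ^ (q - r - 1) * c) * (M ^ (q - r - 1) * e) := by
        gcongr
        · exact pow_le_pow_pred_mul ha haM hr
        · exact pow_le_pow_pred_mul hc hcM (by omega)
        · exact pow_le_pow_pred_mul he heM (by omega)
    _ = M ^ (2 * q - 3) * (a * e * c) := by
        rw [show 2 * q - 3 = (r - 1) + r + (q - r - 1) + (q - r - 1) by omega]
        ring

section Translation

variable {G : Type*} [MeasurableSpace G] [AddCommGroup G] [MeasurableAdd G] {μ : Measure G}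
  [μ.IsAddLeftInvariant]

theorem lintegral_const_mul_comp_sub_right {f : G → ℝ≥0∞} (hf : AEMeasurable f μ)
    (c : ℝ≥0∞) (a : G) : ∫⁻ x, c * f (x - a) ∂μ = c * ∫⁻ x, f x ∂μ := by
  rw [lintegral_sub_right_eq_self (fun x ↦ c * f x) a, lintegral_const_mul'' c hf]

variable [MeasurableNeg G] [μ.IsNegInvariant]

theorem lintegral_const_mul_comp_sub_left {f : G → ℝ≥0∞} (hf : AEMeasurable f μ)
    (c : ℝ≥0∞) (a : G) : ∫⁻ x, c * f (a - x) ∂μ = c * ∫⁻ x, f x ∂μ := by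
  rw [lintegral_sub_left_eq_self (fun x ↦ c * f x) a, lintegral_const_mul'' c hf]

variable [SFinite μ]

theorem setLIntegral_prod_four_path_le {f : G → ℝ≥0∞} (hf : AEMeasurable f μ) (B : Set G) :
    ∫⁻ p in B ×ˢ B ×ˢ B ×ˢ B,
        f (p.2.1 - p.1) * f (p.1 - p.2.2.1) * f (p.2.2.2 - p.2.1) ∂μ.prod (μ.prod (μ.prod μ))
      ≤ μ B * (∫⁻ x, f x ∂μ) ^ 3 := by
  set J := ∫⁻ x, f x ∂μ with hJ
  have inner (s t : G) :
      ∫⁻ s', ∫⁻ t', f (t - s) * f (s - s') * f (t' - t) ∂μ ∂μ = f (t - s) * J ^ 2 := by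
    simp_rw [lintegral_const_mul_comp_sub_right hf, ← hJ, mul_right_comm _ _ J,
      lintegral_const_mul_comp_sub_left hf, ← hJ]
    ring
  calc ∫⁻ p in B ×ˢ B ×ˢ B ×ˢ B,
        f (p.2.1 - p.1) * f (p.1 - p.2.2.1) * f (p.2.2.2 - p.2.1) ∂μ.prod (μ.prod (μ.prod μ))
      ≤ ∫⁻ p in B ×ˢ Set.univ,
          f (p.2.1 - p.1) * f (p.1 - p.2.2.1) * f (p.2.2.2 - p.2.1) ∂μ.prod (μ.prod (μ.prod μ)) :=
        lintegral_mono_set (Set.prod_mono le_rfl (Set.subset_univ _))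
    _ ≤ ∫⁻ s in B, ∫⁻ t, ∫⁻ s', ∫⁻ t', f (t - s) * f (s - s') * f (t' - t) ∂μ ∂μ ∂μ ∂μ := by
        rw [← Measure.prod_restrict, Measure.restrict_univ]
        refine (lintegral_prod_le _).trans (lintegral_mono fun s ↦ ?_)
        exact (lintegral_prod_le _).trans (lintegral_mono fun t ↦ lintegral_prod_le _)
    _ = ∫⁻ s in B, J ^ 3 ∂μ := by
        simp_rw [inner, mul_comm _ (J ^ 2), lintegral_const_mul_comp_sub_right hf, ← hJ]
        ring_nf
    _ = μ B * J ^ 3 := by rw [setLIntegral_const, mul_comm]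

theorem setIntegral_prod_four_contraction_le {Ψ : G → ℝ} {M : ℝ} (hnonneg : ∀ x, 0 ≤ Ψ x)
    (hM : ∀ x, Ψ x ≤ M) (hint : Integrable Ψ μ) {q r : ℕ} (hr : 1 ≤ r) (hrq : r < q)
    {B : Set G} (hB : μ B ≠ ∞) :
    ∫ p in B ×ˢ B ×ˢ B ×ˢ B, Ψ (p.2.1 - p.1) ^ r * Ψ (p.2.2.2 - p.2.2.1) ^ r *
        Ψ (p.2.2.2 - p.2.1) ^ (q - r) * Ψ (p.1 - p.2.2.1) ^ (q - r) ∂μ.prod (μ.prod (μ.prod μ))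
      ≤ M ^ (2 * q - 3) * (∫ x, Ψ x ∂μ) ^ 3 * (μ B).toReal := by
  have hM0 : 0 ≤ M := (hnonneg 0).trans (hM 0)
  have hΨ0 : 0 ≤ ∫ x, Ψ x ∂μ := integral_nonneg hnonneg
  have pointwise (x y z w : G) :
      ENNReal.ofReal ‖Ψ x ^ r * Ψ y ^ r * Ψ z ^ (q - r) * Ψ w ^ (q - r)‖ ≤
        ENNReal.ofReal (M ^ (2 * q - 3)) *
          (ENNReal.ofReal (Ψ x) * ENNReal.ofReal (Ψ w) * ENNReal.ofReal (Ψ z)) := by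
    have := hnonneg x; have := hnonneg y; have := hnonneg z; have := hnonneg w
    rw [Real.norm_of_nonneg (by positivity), ← ENNReal.ofReal_mul (hnonneg x),
      ← ENNReal.ofReal_mul (by positivity), ← ENNReal.ofReal_mul (by positivity)]
    exact ENNReal.ofReal_le_ofReal (contraction_monomial_le (hnonneg _) (hnonneg _) (hnonneg _)
      (hnonneg _) (hM _) (hM _) (hM _) (hM _) hr hrq)
  refine (Real.le_norm_self _).trans ((norm_integral_le_lintegral_norm _).trans
    (ENNReal.toReal_le_of_le_ofReal ?_ ?_))
  · positivity
  calc _ ≤ ∫⁻ p in B ×ˢ B ×ˢ B ×ˢ B, ENNReal.ofReal (M ^ (2 * q - 3)) *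
          (ENNReal.ofReal (Ψ (p.2.1 - p.1)) * ENNReal.ofReal (Ψ (p.1 - p.2.2.1)) *
            ENNReal.ofReal (Ψ (p.2.2.2 - p.2.1))) ∂μ.prod (μ.prod (μ.prod μ)) :=
        lintegral_mono fun p ↦ pointwise _ _ _ _
    _ = ENNReal.ofReal (M ^ (2 * q - 3)) * ∫⁻ p in B ×ˢ B ×ˢ B ×ˢ B,
          ENNReal.ofReal (Ψ (p.2.1 - p.1)) * ENNReal.ofReal (Ψ (p.1 - p.2.2.1)) *
            ENNReal.ofReal (Ψ (p.2.2.2 - p.2.1)) ∂μ.prod (μ.prod (μ.prod μ)) :=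
        lintegral_const_mul' _ _ ENNReal.ofReal_ne_top
    _ ≤ ENNReal.ofReal (M ^ (2 * q - 3)) * (μ B * (∫⁻ x, ENNReal.ofReal (Ψ x) ∂μ) ^ 3) := by
        gcongr
        exact setLIntegral_prod_four_path_le hint.aemeasurable.ennreal_ofReal B
    _ = ENNReal.ofReal (M ^ (2 * q - 3) * (∫ x, Ψ x ∂μ) ^ 3 * (μ B).toReal) := by
        rw [← ofReal_toReal hB, ← ofReal_integral_eq_lintegral_ofReal hint (ae_of_all _ hnonneg),
          ← ENNReal.ofReal_pow hΨ0, ← ENNReal.ofReal_mul (by positivity),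
          ← ENNReal.ofReal_mul (by positivity), ENNReal.toReal_ofReal ENNReal.toReal_nonneg]
        ring_nf

end Translation

theorem volume_pi_Icc_neg_eq (ι : Type*) [Fintype ι] {T : ℝ} (hT : 0 ≤ T) :
    volume (Set.pi Set.univ fun _ : ι => Set.Icc (-T) T) =
      ENNReal.ofReal ((2 * T) ^ Fintype.card ι) := by
  rw [volume_pi_pi, ENNReal.ofReal_pow (by linarith)]
  simp [Real.volume_Icc, two_mul]

theorem contraction_integral_bound_general (d : ℕ)
    (Ψ : (Fin d → ℝ) → ℝ) (hnonneg : ∀ x, 0 ≤ Ψ x)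
    (hbdd : ∃ M : ℝ, ∀ x, Ψ x ≤ M) (hint : Integrable Ψ volume) :
    ∀ q r : ℕ, 2 ≤ q → 1 ≤ r → r ≤ q - 1 →
    ∃ C : ℝ, ∀ T : ℝ, 0 < T →
      (1 / (2 * T) ^ (2 * d)) *
        ∫ p in ((Set.pi Set.univ fun _ : Fin d => Set.Icc (-T) T) ×ˢ
                (Set.pi Set.univ fun _ : Fin d => Set.Icc (-T) T) ×ˢ
                (Set.pi Set.univ fun _ : Fin d => Set.Icc (-T) T) ×ˢ
                (Set.pi Set.univ fun _ : Fin d => Set.Icc (-T) T)),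
          Ψ (p.2.1 - p.1) ^ r * Ψ (p.2.2.2 - p.2.2.1) ^ r *
            Ψ (p.2.2.2 - p.2.1) ^ (q - r) * Ψ (p.1 - p.2.2.1) ^ (q - r) ∂volume
      ≤ C / (2 * T) ^ d := by
  intro q r hq hr hrq
  obtain ⟨M, hM⟩ := hbdd
  refine ⟨M ^ (2 * q - 3) * (∫ x, Ψ x) ^ 3, fun T hT ↦ ?_⟩
  have hvol := volume_pi_Icc_neg_eq (Fin d) hT.le
  rw [Fintype.card_fin] at hvol
  have key := setIntegral_prod_four_contraction_le (q := q) hnonneg hM hint hr (by omega)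
    (hvol ▸ ENNReal.ofReal_ne_top)
  rw [hvol, ENNReal.toReal_ofReal (by positivity)] at key
  calc (1 / (2 * T) ^ (2 * d)) * _
      ≤ (1 / (2 * T) ^ (2 * d)) * (M ^ (2 * q - 3) * (∫ x, Ψ x) ^ 3 * (2 * T) ^ d) := by
        gcongr
        exact key
    _ = M ^ (2 * q - 3) * (∫ x, Ψ x) ^ 3 / (2 * T) ^ d := by
        field_simp
        ring

/-- Contraction estimate: for bounded integrable `Ψ ≥ 0` on `ℝ^d`, `q ≥ 2`,
`1 ≤ r ≤ q−1`, the normalized fourfold integral of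
`Ψ(t−s)^r Ψ(t'−s')^r Ψ(t'−t)^{q−r} Ψ(s−s')^{q−r}` over `([−T,T]^d)⁴`
is bounded by `C/(2T)^d` with `C` independent of `T`. -/
theorem contraction_integral_bound (d : ℕ) (hd : 0 < d)
    (Ψ : (Fin d → ℝ) → ℝ) (hnonneg : ∀ x, 0 ≤ Ψ x)
    (hbdd : ∃ M : ℝ, ∀ x, Ψ x ≤ M) (hint : Integrable Ψ volume) :
    ∀ q r : ℕ, 2 ≤ q → 1 ≤ r → r ≤ q - 1 →
    ∃ C : ℝ, ∀ T : ℝ, 0 < T →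
      (1 / (2 * T) ^ (2 * d)) *
        ∫ p in ((Set.pi Set.univ fun _ : Fin d => Set.Icc (-T) T) ×ˢ
                (Set.pi Set.univ fun _ : Fin d => Set.Icc (-T) T) ×ˢ
                (Set.pi Set.univ fun _ : Fin d => Set.Icc (-T) T) ×ˢ
                (Set.pi Set.univ fun _ : Fin d => Set.Icc (-T) T)),
          Ψ (p.2.1 - p.1) ^ r * Ψ (p.2.2.2 - p.2.2.1) ^ r *
            Ψ (p.2.2.2 - p.2.1) ^ (q - r) * Ψ (p.1 - p.2.2.1) ^ (q - r) ∂volume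
      ≤ C / (2 * T) ^ d :=
  contraction_integral_bound_general d Ψ hnonneg hbdd hint
end
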